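/- (Paper's Corollary: even given the exact arrival time of the last request, there is no c-competitive algorithm for the OLTSP with c < 2.) There exists a geodesic metric space M with origin o such that for every advice-receiving online algorithm (ALG_τ)_{τ∈ℝ} and every real c < 2, there exists a nonempty finite request sequence x with last release time t_n(x) such that the completion time produced by ALG_{t_n(x)} on x exceeds c · Z(x). In other words, a perfect prediction of the last arrival time does not allow any online algorithm to achieve a competitive ratio below 2. -/

import Mathlib

/-- Feasibility of a pair `(σ, T)` for a request sequence (given as a list) in a metric
space with origin `o`. -/
def FeasibleL {M : Type*} [MetricSpace M] (o : M) (x : List (ℝ × M))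
    (σ : ℝ → M) (T : ℝ) : Prop :=
  (LipschitzWith 1 σ ∧ ∀ s : ℝ, s ≤ 0 → σ s = o) ∧ 0 ≤ T ∧ σ T = o ∧
    ∀ r ∈ x, ∃ s : ℝ, r.1 ≤ s ∧ s ≤ T ∧ σ s = r.2

/-- The optimal offline completion time of a request sequence. -/
noncomputable def ZL {M : Type*} [MetricSpace M] (o : M) (x : List (ℝ × M)) : ℝ :=
  sInf {T : ℝ | ∃ σ : ℝ → M, FeasibleL o x σ T}

/-- `M` is geodesic: any two points are joined by a unit-speed geodesic. -/
def IsGeodesicSpace (M : Type*) [MetricSpace M] : Prop :=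
  ∀ a b : M, ∃ γ : ℝ → M, LipschitzWith 1 γ ∧ γ 0 = a ∧ γ (dist a b) = b

/-- A causal online algorithm: it assigns to every request sequence a feasible pair
(schedule, completion time), and whenever two request sequences contain exactly the same
requests with release time `≤ τ` (as multisets), the two schedules agree at all times
`≤ τ`. -/
structure OnlineAlg (M : Type*) [MetricSpace M] (o : M) where
  sched : List (ℝ × M) → ℝ → M
  time : List (ℝ × M) → ℝ
  feasible : ∀ x, FeasibleL o x (sched x) (time x)
  causal : ∀ (τ : ℝ) (x y : List (ℝ × M)),
    (x.filter fun r => decide (r.1 ≤ τ)).Perm (y.filter fun r => decide (r.1 ≤ τ)) →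
    ∀ s ≤ τ, sched x s = sched y s

/-!
Work in `ℓ^∞(ℕ)` (as `ℕ →ᵇ ℝ`) with the tips `tip i`, at distance `1` from the origin and at
distance `2` from each other. The algorithm is told that the last request arrives at time
`m = 2n - 1`. At time `0` all `n` tips are requested; afterwards, every tip the algorithm visits
during a window `[j, j + 1)` with `j < m` is requested again at time `j + 1`. So no visit before
time `m` serves a tip for good, and serving the `n` tips after time `m`, two time units apart,
and returning costs at least `m + 2(n - 1) + 1 = 4n - 2`. Repeated requests of distinct tips
come from visits two units apart, so they are released at integer times two units apart, all at
most `m`; hence the `k`-th tip in order of last release was last released by time `2k + 1`, and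
the offline server visiting the tips in that order at the times `1, 3, …, 2n - 1` is back at `2n`. Letting `n → ∞` gives the ratio `2`.
-/

open Finset Metric BoundedContinuousFunction

lemma LipschitzWith.const_sub {α : Type*} [PseudoMetricSpace α] {K : NNReal} {f : α → ℝ}
    (hf : LipschitzWith K f) (a : ℝ) : LipschitzWith K fun x => a - f x :=
  LipschitzWith.of_dist_le_mul fun x y => by
    simpa only [dist_sub_left] using hf.dist_le_mul x y

namespace OLTSP

section General

variable {M : Type*}

lemma ZL_nonneg [MetricSpace M] (o : M) (x : List (ℝ × M)) : 0 ≤ ZL o x :=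
  Real.sInf_nonneg fun _ ⟨_, hσ⟩ => hσ.2.1

lemma ZL_le_of_feasible [MetricSpace M] {o : M} {x : List (ℝ × M)} {σ : ℝ → M} {T : ℝ}
    (h : FeasibleL o x σ T) : ZL o x ≤ T :=
  csInf_le ⟨0, fun _ ⟨_, hσ⟩ => hσ.2.1⟩ ⟨σ, h⟩

noncomputable def lastRelease (x : List (ℝ × M)) (q : M) : ℝ := sSup {t | (t, q) ∈ x}

lemma finite_releases (x : List (ℝ × M)) (q : M) : {t | (t, q) ∈ x}.Finite :=
  (x.finite_toSet.image Prod.fst).subset fun t ht => ⟨(t, q), ht, rfl⟩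

lemma le_lastRelease {x : List (ℝ × M)} {q : M} {t : ℝ} (h : (t, q) ∈ x) :
    t ≤ lastRelease x q :=
  le_csSup (finite_releases x q).bddAbove h

lemma lastRelease_mem {x : List (ℝ × M)} {q : M} {t : ℝ} (h : (t, q) ∈ x) :
    (lastRelease x q, q) ∈ x :=
  Set.Nonempty.csSup_mem ⟨t, h⟩ (finite_releases x q)

lemma isGeodesicSpace_of_normedAddTorsor (V P : Type*) [NormedAddCommGroup V]
    [NormedSpace ℝ V] [MetricSpace P] [NormedAddTorsor V P] : IsGeodesicSpace P := by
  intro a b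
  rcases eq_or_ne a b with rfl | hab
  · exact ⟨fun _ => a, LipschitzWith.const' a, rfl, rfl⟩
  have hd : dist a b ≠ 0 := dist_ne_zero.2 hab
  refine ⟨fun t => AffineMap.lineMap a b (t / dist a b),
    LipschitzWith.of_dist_le_mul fun s t => ?_, by simp, by simp [div_self hd]⟩
  rw [dist_lineMap_lineMap, Real.dist_eq, ← sub_div, abs_div, abs_of_nonneg dist_nonneg,
    div_mul_cancel₀ _ hd, NNReal.coe_one, one_mul, Real.dist_eq]

lemma exists_add_mul_card_sub_one_le {ι : Type*} (f : ι → ℝ) {a d : ℝ} {s : Finset ι}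
    (hs : s.Nonempty) (ha : ∀ i ∈ s, a ≤ f i)
    (hd : (s : Set ι).Pairwise fun i j => d ≤ dist (f i) (f j)) :
    ∃ i ∈ s, a + d * (#s - 1) ≤ f i := by
  classical
  induction s using Finset.induction_on_max_value f with
  | empty => exact absurd hs Finset.not_nonempty_empty
  | insert b s hb hmax ih =>
    rcases s.eq_empty_or_nonempty with rfl | hne
    · exact ⟨b, mem_insert_self b ∅, by simpa using ha b (mem_insert_self b ∅)⟩
    obtain ⟨i, hi, hai⟩ := ih hne (fun j hj => ha j (mem_insert_of_mem hj))
      (hd.mono (by simp [Set.subset_insert]))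
    have hdi : d ≤ f b - f i := by
      have : d ≤ dist (f b) (f i) :=
        hd (mem_insert_self b s) (mem_insert_of_mem hi) (ne_of_mem_of_not_mem hi hb).symm
      rwa [Real.dist_eq, abs_of_nonneg (sub_nonneg.2 (hmax i hi))] at this
    refine ⟨b, mem_insert_self b s, ?_⟩
    rw [card_insert_of_notMem hb, Nat.cast_add, Nat.cast_one]
    linarith

lemma natCast_le_dist_natFloor {s t : ℝ} (hs : 0 ≤ s) (ht : 0 ≤ t) {d : ℕ}
    (h : d ≤ dist s t) : (d : ℝ) ≤ dist (⌊s⌋₊ : ℝ) ⌊t⌋₊ := by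
  wlog hst : s ≤ t generalizing s t
  · rw [dist_comm] at h ⊢
    exact this ht hs h (le_of_not_ge hst)
  rw [Real.dist_eq, abs_sub_comm, abs_of_nonneg (sub_nonneg.2 hst)] at h
  have : ⌊s⌋₊ + d ≤ ⌊t⌋₊ := by
    rw [← Nat.floor_add_natCast hs]
    exact Nat.floor_mono (by linarith)
  have : (⌊s⌋₊ : ℝ) + d ≤ ⌊t⌋₊ := by exact_mod_cast this
  rw [Real.dist_eq, abs_sub_comm, abs_of_nonneg (by linarith [(d.cast_nonneg : (0 : ℝ) ≤ d)])]
  linarith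

end General

section Tips

noncomputable def tip (i : ℕ) : ℕ →ᵇ ℝ :=
  ofNormedAddCommGroupDiscrete (fun k => if k = i then 1 else -1) 1 fun k => by
    split_ifs <;> simp

lemma tip_apply (i k : ℕ) : tip i k = if k = i then 1 else -1 := rfl

lemma one_le_dist_tip_zero (i : ℕ) : 1 ≤ dist (tip i) 0 := by
  simpa [tip_apply] using dist_coe_le_dist (f := tip i) (g := 0) i

lemma two_le_dist_tip {i j : ℕ} (h : i ≠ j) : 2 ≤ dist (tip i) (tip j) := by
  have := dist_coe_le_dist (f := tip i) (g := tip j) i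
  rw [tip_apply, tip_apply, if_pos rfl, if_neg h, Real.dist_eq] at this
  norm_num at this
  linarith

lemma tip_ne_zero (i : ℕ) : tip i ≠ 0 := fun h => by
  have := one_le_dist_tip_zero i
  norm_num [h] at this

lemma tip_injective : Function.Injective tip := fun i j h => by
  by_contra hij
  have := two_le_dist_tip hij
  norm_num [h] at this

lemma two_le_dist_of_eq_tip {σ : ℝ → ℕ →ᵇ ℝ} (hσ : LipschitzWith 1 σ) {s t : ℝ}
    {i j : ℕ} (hij : i ≠ j) (hs : σ s = tip i) (ht : σ t = tip j) : 2 ≤ dist s t :=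
  calc (2 : ℝ) ≤ dist (tip i) (tip j) := two_le_dist_tip hij
    _ = dist (σ s) (σ t) := by rw [hs, ht]
    _ ≤ dist s t := by simpa using hσ.dist_le_mul s t

end Tips

section Tour

variable {n : ℕ} (w : Fin n → ℝ)

noncomputable def visitBump (t : ℝ) : ℝ := max 0 (1 - infDist t (Set.range w))

lemma visitBump_nonneg (t : ℝ) : 0 ≤ visitBump w t := le_max_left _ _

lemma visitBump_le_one (t : ℝ) : visitBump w t ≤ 1 :=
  max_le zero_le_one (by linarith [infDist_nonneg (x := t) (s := Set.range w)])

lemma lipschitzWith_visitBump : LipschitzWith 1 (visitBump w) :=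
  ((lipschitz_infDist_pt _).const_sub 1).const_max 0

lemma visitBump_visit (i : Fin n) : visitBump w (w i) = 1 := by
  simp [visitBump, infDist_zero_of_mem (Set.mem_range_self i)]

lemma visitBump_eq_zero [NeZero n] {t : ℝ} (h : ∀ i, 1 ≤ dist t (w i)) :
    visitBump w t = 0 := by
  have : 1 ≤ infDist t (Set.range w) :=
    (le_infDist (Set.range_nonempty w)).2 (by rintro _ ⟨i, rfl⟩; exact h i)
  simp only [visitBump, max_eq_left_iff]
  linarith

/-- Coordinate `k` of the tour. Being a maximum of `1`-Lipschitz functions it is `1`-Lipschitz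
for any `w`; the separation of the visit times is only needed for its values at the visits. -/
noncomputable def tourCoord (k : ℕ) (t : ℝ) : ℝ :=
  if h : k < n then max (-visitBump w t) (1 - dist t (w ⟨k, h⟩)) else -visitBump w t

lemma abs_tourCoord_le_one (k : ℕ) (t : ℝ) : |tourCoord w k t| ≤ 1 := by
  have h0 := visitBump_nonneg w t
  have h1 := visitBump_le_one w t
  unfold tourCoord
  split_ifs
  · rw [abs_le]
    constructor
    · linarith [le_max_left (-visitBump w t) (1 - dist t (w ⟨k, ‹_›⟩))]
    · exact max_le (by linarith) (by linarith [dist_nonneg (x := t) (y := w ⟨k, ‹_›⟩)])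
  · rw [abs_le]
    constructor <;> linarith

lemma lipschitzWith_tourCoord (k : ℕ) : LipschitzWith 1 (tourCoord w k) := by
  have hneg : LipschitzWith 1 fun t => -visitBump w t :=
    lipschitzWith_neg_iff.2 (lipschitzWith_visitBump w)
  unfold tourCoord
  split_ifs
  · simpa using hneg.max ((LipschitzWith.dist_left _).const_sub 1)
  · exact hneg

noncomputable def tour (t : ℝ) : ℕ →ᵇ ℝ :=
  ofNormedAddCommGroupDiscrete (fun k => tourCoord w k t) 1 fun k => abs_tourCoord_le_one w k t

lemma lipschitzWith_tour : LipschitzWith 1 (tour w) :=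
  LipschitzWith.of_dist_le_mul fun s t => (dist_le (by positivity)).2 fun k =>
    (lipschitzWith_tourCoord w k).dist_le_mul s t

lemma tour_visit (hw : Pairwise fun i j => 2 ≤ dist (w i) (w j)) (i : Fin n) :
    tour w (w i) = tip i := by
  ext k
  simp only [tour, coe_ofNormedAddCommGroupDiscrete, tourCoord, visitBump_visit, tip_apply]
  split_ifs with hk hki hki
  · obtain rfl : i = ⟨k, hk⟩ := Fin.ext hki.symm
    simp
  · have := hw (i := i) (j := ⟨k, hk⟩) (fun h => hki (congrArg Fin.val h).symm)
    exact max_eq_left (by linarith)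
  · exact absurd (hki ▸ i.isLt) hk
  · rfl

lemma tour_eq_zero [NeZero n] {t : ℝ} (h : ∀ i, 1 ≤ dist t (w i)) : tour w t = 0 := by
  ext k
  simp only [tour, coe_ofNormedAddCommGroupDiscrete, tourCoord, visitBump_eq_zero w h]
  split_ifs with hk
  · simpa using h ⟨k, hk⟩
  · simp

lemma feasibleL_tour [NeZero n] {x : List (ℝ × (ℕ →ᵇ ℝ))} {T : ℝ}
    (hsep : Pairwise fun i j => 2 ≤ dist (w i) (w j)) (hw : ∀ i, 1 ≤ w i ∧ w i + 1 ≤ T)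
    (hx : ∀ r ∈ x, (r.1 ≤ T ∧ r.2 = 0) ∨ ∃ i, r.1 ≤ w i ∧ r.2 = tip i) :
    FeasibleL 0 x (tour w) T := by
  have hT : tour w T = 0 := tour_eq_zero w fun i => by
    rw [Real.dist_eq, abs_of_nonneg] <;> linarith [hw i]
  refine ⟨⟨lipschitzWith_tour w, fun s hs => tour_eq_zero w fun i => ?_⟩,
    by linarith [hw 0], hT, fun r hr => ?_⟩
  · rw [Real.dist_eq, abs_sub_comm, abs_of_nonneg] <;> linarith [hw i]
  rcases hx r hr with ⟨hrT, hr0⟩ | ⟨i, hri, hrt⟩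
  · exact ⟨T, hrT, le_rfl, by rw [hT, hr0]⟩
  · exact ⟨w i, hri, by linarith [hw i], by rw [tour_visit w hsep, hrt]⟩

end Tour


def VisitsIn {M : Type*} (σ : ℝ → M) (q : M) (j : ℕ) : Prop :=
  ∃ s, (j : ℝ) ≤ s ∧ s < j + 1 ∧ σ s = q

section Adversary

variable (A : ℝ → OnlineAlg (ℕ →ᵇ ℝ) 0) (n m : ℕ)

open Classical in
/-- The requests released by the end of window `j`. The origin is requested at time `m` from the
start, so that the advice `m` is the last release time of the final sequence. -/
noncomputable def requestsUpTo : ℕ → List (ℝ × (ℕ →ᵇ ℝ))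
  | 0 => ((m : ℝ), 0) :: List.ofFn fun i : Fin n => (0, tip i)
  | j + 1 => requestsUpTo j ++
      ((List.finRange n).filter fun i => VisitsIn ((A m).sched (requestsUpTo j)) (tip i) j).map
        fun i => ((j : ℝ) + 1, tip i)

noncomputable def adversary : List (ℝ × (ℕ →ᵇ ℝ)) := requestsUpTo A n m m

variable {A n m}

lemma mem_requestsUpTo_zero {r : ℝ × (ℕ →ᵇ ℝ)} :
    r ∈ requestsUpTo A n m 0 ↔ r = ((m : ℝ), 0) ∨ ∃ i : Fin n, r = (0, tip i) := by
  simp [requestsUpTo, List.mem_ofFn, eq_comm]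

lemma mem_requestsUpTo_succ {r : ℝ × (ℕ →ᵇ ℝ)} {j : ℕ} :
    r ∈ requestsUpTo A n m (j + 1) ↔ r ∈ requestsUpTo A n m j ∨
      ∃ i : Fin n, VisitsIn ((A m).sched (requestsUpTo A n m j)) (tip i) j ∧
        r = ((j : ℝ) + 1, tip i) := by
  simp [requestsUpTo, eq_comm]

lemma requestsUpTo_eq_append {j j' : ℕ} (h : j ≤ j') :
    ∃ t, requestsUpTo A n m j' = requestsUpTo A n m j ++ t ∧
      ∀ r ∈ t, (j : ℝ) + 1 ≤ r.1 := by
  induction j', h using Nat.le_induction with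
  | base => exact ⟨[], by simp, by simp⟩
  | succ j' hjj' ih =>
    obtain ⟨t, ht, hrel⟩ := ih
    refine ⟨t ++ _, by rw [requestsUpTo, ht, List.append_assoc], fun r hr => ?_⟩
    rcases List.mem_append.1 hr with hr | hr
    · exact hrel r hr
    · obtain ⟨i, -, rfl⟩ := List.mem_map.1 hr
      have : (j : ℝ) ≤ j' := by exact_mod_cast hjj'
      simpa using this

lemma sched_adversary_eq {j : ℕ} (hj : j ≤ m) {s : ℝ} (hs : s < j + 1) :
    (A m).sched (adversary A n m) s = (A m).sched (requestsUpTo A n m j) s := by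
  obtain ⟨t, ht, hrel⟩ := requestsUpTo_eq_append (A := A) hj
  refine (A m).causal s _ _ ?_ s le_rfl
  have : t.filter (fun r => decide (r.1 ≤ s)) = [] :=
    List.filter_eq_nil_iff.2 fun r hr => by simpa using hs.trans_le (hrel r hr)
  rw [adversary, ht, List.filter_append, this, List.append_nil]

lemma visitsIn_adversary_iff {j : ℕ} (hj : j ≤ m) {q : ℕ →ᵇ ℝ} :
    VisitsIn ((A m).sched (adversary A n m)) q j ↔
      VisitsIn ((A m).sched (requestsUpTo A n m j)) q j := by
  refine exists_congr fun s => and_congr_right fun _ => and_congr_right fun hs => ?_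
  rw [sched_adversary_eq hj hs]

lemma mem_adversary_iff {r : ℝ × (ℕ →ᵇ ℝ)} :
    r ∈ adversary A n m ↔ r = ((m : ℝ), 0) ∨ (∃ i : Fin n, r = (0, tip i)) ∨
      ∃ j < m, ∃ i : Fin n, VisitsIn ((A m).sched (adversary A n m)) (tip i) j ∧
        r = ((j : ℝ) + 1, tip i) := by
  suffices ∀ j' ≤ m, (r ∈ requestsUpTo A n m j' ↔ r = ((m : ℝ), 0) ∨
      (∃ i : Fin n, r = (0, tip i)) ∨ ∃ j < j', ∃ i : Fin n,
        VisitsIn ((A m).sched (adversary A n m)) (tip i) j ∧ r = ((j : ℝ) + 1, tip i)) from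
    this m le_rfl
  intro j' hj'
  induction j' with
  | zero => simp [mem_requestsUpTo_zero]
  | succ j' ih =>
    rw [mem_requestsUpTo_succ, ih (by omega)]
    simp only [Nat.lt_succ_iff_lt_or_eq, or_and_right, exists_or, exists_eq_left,
      visitsIn_adversary_iff (A := A) (n := n) (by omega : j' ≤ m), or_assoc]

lemma origin_mem_adversary : ((m : ℝ), (0 : ℕ →ᵇ ℝ)) ∈ adversary A n m :=
  mem_adversary_iff.2 (Or.inl rfl)

lemma tip_mem_adversary (i : Fin n) : ((0 : ℝ), tip i) ∈ adversary A n m :=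
  mem_adversary_iff.2 (Or.inr (Or.inl ⟨i, rfl⟩))

lemma release_mem_Icc_of_mem_adversary {r : ℝ × (ℕ →ᵇ ℝ)} (hr : r ∈ adversary A n m) :
    r.1 ∈ Set.Icc 0 (m : ℝ) := by
  rcases mem_adversary_iff.1 hr with rfl | ⟨i, rfl⟩ | ⟨j, hj, i, -, rfl⟩
  · simp
  · simp
  · refine ⟨by positivity, ?_⟩
    dsimp only
    exact_mod_cast (by omega : j + 1 ≤ m)

lemma mem_adversary_of_visitsIn {j : ℕ} (hj : j < m) {i : Fin n}
    (h : VisitsIn ((A m).sched (adversary A n m)) (tip i) j) :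
    ((j : ℝ) + 1, tip i) ∈ adversary A n m :=
  mem_adversary_iff.2 (Or.inr (Or.inr ⟨j, hj, i, h, rfl⟩))

/-- A visit at a time `s < m` lies in the window `⌊s⌋₊`, which triggers a later request. -/
lemma le_of_lastRelease_le_of_visit {i : Fin n} {s : ℝ}
    (hs : lastRelease (adversary A n m) (tip i) ≤ s)
    (hv : (A m).sched (adversary A n m) s = tip i) :
    (m : ℝ) ≤ s := by
  by_contra! hsm
  have h0 : 0 ≤ s :=
    (release_mem_Icc_of_mem_adversary (lastRelease_mem (tip_mem_adversary i))).1.trans hs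
  have hmem := mem_adversary_of_visitsIn ((Nat.floor_lt h0).2 hsm)
    ⟨s, Nat.floor_le h0, Nat.lt_floor_add_one s, hv⟩
  linarith [le_lastRelease hmem, Nat.lt_floor_add_one s]

lemma add_two_mul_sub_one_le_time [NeZero n] :
    (m : ℝ) + 2 * n - 1 ≤ (A m).time (adversary A n m) := by
  obtain ⟨⟨hlip, -⟩, -, hT, hserve⟩ := (A m).feasible (adversary A n m)
  choose w hw using fun i : Fin n => hserve _ (lastRelease_mem (tip_mem_adversary i))
  obtain ⟨i, -, hi⟩ := exists_add_mul_card_sub_one_le w (s := univ) univ_nonempty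
    (fun i _ => le_of_lastRelease_le_of_visit (hw i).1 (hw i).2.2)
    (fun i _ j _ hij =>
      two_le_dist_of_eq_tip hlip (Fin.val_injective.ne hij) (hw i).2.2 (hw j).2.2)
  have hret : 1 ≤ (A m).time (adversary A n m) - w i :=
    calc 1 ≤ dist (tip i) 0 := one_le_dist_tip_zero i
      _ ≤ dist (w i) ((A m).time (adversary A n m)) := by
        simpa [(hw i).2.2, hT] using hlip.dist_le_mul (w i) ((A m).time (adversary A n m))
      _ = _ := by rw [Real.dist_eq, abs_sub_comm, abs_of_nonneg (by linarith [(hw i).2.1])]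
  rw [card_univ, Fintype.card_fin] at hi
  linarith

lemma exists_visit_of_lastRelease_pos {i : Fin n}
    (h : 0 < lastRelease (adversary A n m) (tip i)) :
    ∃ s, 0 ≤ s ∧ lastRelease (adversary A n m) (tip i) = ⌊s⌋₊ + 1 ∧
      (A m).sched (adversary A n m) s = tip i := by
  rcases mem_adversary_iff.1 (lastRelease_mem (tip_mem_adversary (A := A) (m := m) i)) with
    h0 | ⟨i', h0⟩ | ⟨j, -, i', ⟨s, hjs, hsj, hv⟩, hj⟩
  · exact absurd (congrArg Prod.snd h0) (tip_ne_zero i)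
  · exact absurd (congrArg Prod.fst h0) h.ne'
  · obtain ⟨hℓ, hq⟩ := Prod.mk.inj hj
    obtain rfl : i = i' := Fin.val_injective (tip_injective hq)
    have h0 : 0 ≤ s := (Nat.cast_nonneg j).trans hjs
    exact ⟨s, h0, by rw [hℓ, (Nat.floor_eq_iff h0).2 ⟨hjs, hsj⟩], hv⟩

lemma two_le_dist_lastRelease {i j : Fin n} (hij : i ≠ j)
    (hi : 0 < lastRelease (adversary A n m) (tip i))
    (hj : 0 < lastRelease (adversary A n m) (tip j)) :
    2 ≤ dist (lastRelease (adversary A n m) (tip i)) (lastRelease (adversary A n m) (tip j)) := by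
  obtain ⟨s, hs, hsi, hvs⟩ := exists_visit_of_lastRelease_pos hi
  obtain ⟨t, ht, htj, hvt⟩ := exists_visit_of_lastRelease_pos hj
  have hlip := ((A m).feasible (adversary A n m)).1.1
  rw [hsi, htj, dist_add_right]
  exact_mod_cast natCast_le_dist_natFloor hs ht (d := 2)
    (by exact_mod_cast two_le_dist_of_eq_tip hlip (Fin.val_injective.ne hij) hvs hvt)

lemma lastRelease_sort_le (hm : m < 2 * n) (k : Fin n) :
    lastRelease (adversary A n m) (tip (Tuple.sort (fun i : Fin n =>
      lastRelease (adversary A n m) (tip i)) k)) ≤ 2 * k + 1 := by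
  set ℓ := fun i : Fin n => lastRelease (adversary A n m) (tip i)
  set σ := Tuple.sort ℓ
  change ℓ (σ k) ≤ 2 * k + 1
  rcases le_or_gt (ℓ (σ k)) 0 with hk | hk
  · linarith
  have hmono : ∀ k' ∈ Ici k, ℓ (σ k) ≤ ℓ (σ k') := fun k' hk' =>
    Tuple.monotone_sort ℓ (mem_Ici.1 hk')
  obtain ⟨k', -, hk'⟩ := exists_add_mul_card_sub_one_le (ℓ ∘ σ) nonempty_Ici hmono
    (fun k₁ h₁ k₂ h₂ h₁₂ => two_le_dist_lastRelease (σ.injective.ne h₁₂)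
      (hk.trans_le (hmono k₁ h₁)) (hk.trans_le (hmono k₂ h₂)))
  have hm' : (m : ℝ) + 1 ≤ 2 * n := by exact_mod_cast hm
  have hk'm := (release_mem_Icc_of_mem_adversary
    (lastRelease_mem (tip_mem_adversary (A := A) (m := m) (σ k')))).2
  rw [Fin.card_Ici, Nat.cast_sub k.isLt.le] at hk'
  simp only [Function.comp_apply] at hk'
  linarith

lemma ZL_adversary_le [NeZero n] (hm : m < 2 * n) : ZL 0 (adversary A n m) ≤ 2 * n := by
  set σ := Tuple.sort fun i : Fin n => lastRelease (adversary A n m) (tip i)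
  let w : Fin n → ℝ := fun i => 2 * (σ.symm i : ℕ) + 1
  refine ZL_le_of_feasible (feasibleL_tour w (fun i j hij => ?_) (fun i => ⟨?_, ?_⟩) ?_)
  · have : 1 ≤ dist (σ.symm i : ℕ) (σ.symm j : ℕ) :=
      Nat.pairwise_one_le_dist (Fin.val_injective.ne (σ.symm.injective.ne hij))
    rw [← Nat.dist_cast_real, Real.dist_eq] at this
    change 2 ≤ dist (w i) (w j)
    rw [Real.dist_eq, show w i - w j = 2 * ((σ.symm i : ℕ) - (σ.symm j : ℕ) : ℝ) by ring,
      abs_mul, abs_two]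
    linarith
  · exact le_add_of_nonneg_left (by positivity)
  · have : ((σ.symm i : ℕ) : ℝ) + 1 ≤ n := by exact_mod_cast (σ.symm i).isLt
    linarith
  · intro r hr
    rcases mem_adversary_iff.1 hr with rfl | ⟨i, rfl⟩ | ⟨j, -, i, -, rfl⟩
    · exact Or.inl ⟨by simp; exact_mod_cast hm.le.trans (by omega), rfl⟩
    all_goals
      refine Or.inr ⟨i, (le_lastRelease hr).trans ?_, rfl⟩
      have := lastRelease_sort_le (A := A) hm (σ.symm i)
      rwa [Equiv.apply_symm_apply] at this

end Adversary

end OLTSP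

open OLTSP

/-- Even given the exact arrival time of the last request as advice, no online algorithm
for the OLTSP is `c`-competitive for any `c < 2`: there is a geodesic metric space with an
origin in which, for every advice-receiving family of causal online algorithms
`(ALG_τ)_{τ ∈ ℝ}` and every `c < 2`, some nonempty request sequence `x` with last release
time `t_n` makes the completion time of `ALG_{t_n}` on `x` exceed `c · Z(x)`. -/
theorem last_arrival_prediction_lower_bound_two :
    ∃ (M : Type) (inst : MetricSpace M) (o : M),
      @IsGeodesicSpace M inst ∧
      ∀ (A : ℝ → @OnlineAlg M inst o) (c : ℝ), c < 2 →
        ∃ (x : List (ℝ × M)) (tn : ℝ), x ≠ [] ∧ (∀ r ∈ x, 0 ≤ r.1) ∧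
          IsGreatest {t : ℝ | ∃ r ∈ x, r.1 = t} tn ∧
          c * @ZL M inst o x < ((A tn).time x) := by
  refine ⟨ℕ →ᵇ ℝ, inferInstance, 0, isGeodesicSpace_of_normedAddTorsor (ℕ →ᵇ ℝ) _,
    fun A c hc => ?_⟩
  obtain ⟨k, hk⟩ := exists_nat_gt (1 / (2 - c))
  have hx := origin_mem_adversary (A := A) (n := k + 1) (m := 2 * k + 1)
  refine ⟨adversary A (k + 1) (2 * k + 1), (2 * k + 1 : ℕ), List.ne_nil_of_mem hx,
    fun r hr => (release_mem_Icc_of_mem_adversary hr).1, ⟨⟨_, hx, rfl⟩, ?_⟩, ?_⟩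
  · rintro _ ⟨r, hr, rfl⟩
    exact (release_mem_Icc_of_mem_adversary hr).2
  have hT := add_two_mul_sub_one_le_time (A := A) (n := k + 1) (m := 2 * k + 1)
  have hZ := ZL_adversary_le (A := A) (n := k + 1) (m := 2 * k + 1) (by omega)
  have hZ0 := ZL_nonneg (0 : ℕ →ᵇ ℝ) (adversary A (k + 1) (2 * k + 1))
  have hk' : 1 < (2 - c) * k := by rwa [div_lt_iff₀ (by linarith), mul_comm] at hk
  push_cast at hT hZ ⊢
  rcases le_or_gt 0 c with hc0 | hc0 <;> nlinarith
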